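/- Let X be a topological space, let α : X → X be a bijection such that α and α⁻¹ are Borel measurable, let F be a Banach function space on X satisfying condition Ω_α, and let w and 1/w both be weights on X. Suppose that for each compact subset K ⊆ X there exist a sequence (D_k)_{k=1}^∞ of Borel subsets of K and a strictly increasing sequence (n_k) of positive integers such that lim_{k→∞} ‖χ_{K∖D_k}‖_F = 0 and, the series below being convergent for each k, lim_{k→∞} Σ_{l=1}^∞ ‖χ_{D_k} · ∏_{s=1}^{l·n_k} (w∘α^{−s})‖_F = lim_{k→∞} Σ_{l=1}^∞ ‖χ_{D_k} · (∏_{s=0}^{l·n_k−1} (w∘α^{s}))^{−1}‖_F = 0. Then the sequence (C^{(n)}_{α,w})_{n∈ℕ₀} is chaotic on F. -/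

import Mathlib

/-!
Bounded compactly supported functions are dense in `F`, and the hypothesis lets one cut such a
function `f` (with `|f| ≤ M`) down to a set `D_k` on which its orbits along the multiples of
`n = n_k` are small: transporting `Tˡⁿ f` by `α^{-ln}` and `Sˡⁿ f` by `α^{ln}`, which preserves the
norm, turns them into `f` times the weights of the hypothesis, so by solidity their norms are at
most `M` times the norms in the two series. For such an `f`, the sum of its whole `ℤ`-orbit under
`Tⁿ` is a nearby common fixed point of `Tⁿ` and `Sⁿ`, hence periodic for `C⁽ⁿ⁾`. For two such
functions `f₁, f₂`, the vector `u = f₁ + 2 Sⁿ f₂` is close to `f₁`, and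
`C⁽ⁿ⁾ u = f₂ + ½ (Tⁿ f₁ + Sⁿ f₁) + S²ⁿ f₂` is close to `f₂`, which gives transitivity.
-/

open Filter Topology

/-- A Banach function space on `X`: a Banach space `F` together with an injective linear
embedding into the Borel measurable functions `X → ℂ`. -/
structure BanachFunctionSpace (X : Type*) [TopologicalSpace X] [MeasurableSpace X]
    (F : Type*) [NormedAddCommGroup F] [NormedSpace ℂ F] [CompleteSpace F] where
  toFunL : F →ₗ[ℂ] (X → ℂ)
  injective : Function.Injective toFunL
  measurable' : ∀ f : F, Measurable (toFunL f)

namespace BanachFunctionSpace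

variable {X : Type*} [TopologicalSpace X] [MeasurableSpace X]
  {F : Type*} [NormedAddCommGroup F] [NormedSpace ℂ F] [CompleteSpace F]

/-- `F` is solid: it contains, with controlled norm, every measurable function dominated
pointwise by a member of `F`. -/
def IsSolid (B : BanachFunctionSpace X F) : Prop :=
  ∀ (f : F) (g : X → ℂ), Measurable g → (∀ x, ‖g x‖ ≤ ‖B.toFunL f x‖) →
    ∃ g' : F, B.toFunL g' = g ∧ ‖g'‖ ≤ ‖f‖

/-- `F` is `α`-invariant: composition with `α` and `α⁻¹` preserves membership and the norm. -/
def IsInvariant (B : BanachFunctionSpace X F) (α : X ≃ X) : Prop :=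
  ∀ f : F, (∃ g : F, B.toFunL g = B.toFunL f ∘ ⇑α ∧ ‖g‖ = ‖f‖) ∧
    (∃ g : F, B.toFunL g = B.toFunL f ∘ ⇑α.symm ∧ ‖g‖ = ‖f‖)

/-- The characteristic function of every compact subset of `X` belongs to `F`. -/
def HasCompactIndicators (B : BanachFunctionSpace X F) : Prop :=
  ∀ E : Set X, IsCompact E → ∃ f : F, B.toFunL f = Set.indicator E 1

/-- The bounded compactly supported functions in `F` are dense in `F`. -/
def DenseBoundedCompact (B : BanachFunctionSpace X F) : Prop :=
  Dense {f : F | (∃ C : ℝ, ∀ x, ‖B.toFunL f x‖ ≤ C) ∧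
    ∃ K : Set X, IsCompact K ∧ ∀ x ∉ K, B.toFunL f x = 0}

/-- Condition `Ω_α`. -/
def ConditionOmega (B : BanachFunctionSpace X F) (α : X ≃ X) : Prop :=
  B.IsSolid ∧ B.IsInvariant α ∧ B.HasCompactIndicators ∧ B.DenseBoundedCompact

end BanachFunctionSpace

/-- `w` and `1/w` are both weights: `w` is Borel measurable, bounded above, and bounded
away from `0`. -/
def IsWeightPair {X : Type*} [MeasurableSpace X] (w : X → ℝ) : Prop :=
  Measurable w ∧ (∃ C : ℝ, ∀ x, w x ≤ C) ∧ ∃ c : ℝ, 0 < c ∧ ∀ x, c ≤ w x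

/-- `α` is aperiodic: every compact set is eventually moved off itself by the iterates. -/
def Aperiodic {X : Type*} [TopologicalSpace X] (α : X ≃ X) : Prop :=
  ∀ K : Set X, IsCompact K → ∃ N : ℕ, 0 < N ∧ ∀ n ≥ N, (⇑α)^[n] '' K ∩ K = ∅

/-- The cosine operator sequence `C⁽ⁿ⁾ = (1/2)(Tⁿ + Sⁿ)`. -/
noncomputable def cosOp {F : Type*} [NormedAddCommGroup F] [NormedSpace ℂ F]
    (T S : F →L[ℂ] F) (n : ℕ) : F →L[ℂ] F :=
  (2 : ℂ)⁻¹ • (T ^ n + S ^ n)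

/-- The set of periodic elements of a sequence of operators. -/
def periodicSet {F : Type*} [NormedAddCommGroup F] [NormedSpace ℂ F]
    (C : ℕ → F →L[ℂ] F) : Set F :=
  {f | ∃ N : ℕ, 0 < N ∧ ∀ k : ℕ, 0 < k → C (k * N) f = f}

/-- Topological transitivity of a sequence of operators. -/
def TopTransitive {F : Type*} [NormedAddCommGroup F] [NormedSpace ℂ F]
    (C : ℕ → F →L[ℂ] F) : Prop :=
  ∀ U V : Set F, IsOpen U → IsOpen V → U.Nonempty → V.Nonempty →
    ∃ n : ℕ, 0 < n ∧ (⇑(C n) '' U ∩ V).Nonempty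

/-- A sequence of operators is chaotic if it is topologically transitive and its set of
periodic elements is dense. -/
def IsChaotic {F : Type*} [NormedAddCommGroup F] [NormedSpace ℂ F]
    (C : ℕ → F →L[ℂ] F) : Prop :=
  TopTransitive C ∧ Dense (periodicSet C)

open Finset

section CosineOperators

variable {F : Type*} [NormedAddCommGroup F] [NormedSpace ℂ F] {T S : F →L[ℂ] F}

lemma pow_apply_pow_apply (hTS : T * S = 1) (n : ℕ) (f : F) : (T ^ n) ((S ^ n) f) = f := by
  rw [← mul_apply_eq_comp, pow_mul_pow_eq_one n hTS, one_apply_eq_self]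

lemma mem_periodicSet_cosOp (hST : S * T = 1) {n : ℕ} (hn : 0 < n) {p : F}
    (hp : (T ^ n) p = p) : p ∈ periodicSet (cosOp T S) := by
  have hSp : (S ^ n) p = p := by
    conv_lhs => rw [← hp, pow_apply_pow_apply hST]
  have fixed (A : F →L[ℂ] F) (hA : A p = p) (k : ℕ) : (A ^ k) p = p := by
    rw [FunLike.coe_pow_eq_iterate]
    exact Function.IsFixedPt.iterate hA k
  refine ⟨n, hn, fun k _ => ?_⟩
  simp only [cosOp, smul_apply, add_apply, mul_comm k, pow_mul, fixed _ hp, fixed _ hSp]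
  module

lemma cosOp_apply_add_two_smul (hTS : T * S = 1) (n : ℕ) (g₁ g₂ : F) :
    cosOp T S n (g₁ + (2 : ℂ) • (S ^ n) g₂)
      = g₂ + (2 : ℂ)⁻¹ • ((T ^ n) g₁ + (S ^ n) g₁) + (S ^ (2 * n)) g₂ := by
  have hSSn : (S ^ n) ((S ^ n) g₂) = (S ^ (2 * n)) g₂ := by
    rw [← mul_apply_eq_comp, ← pow_add, two_mul]
  simp only [cosOp, smul_apply, add_apply, map_add, map_smul, pow_apply_pow_apply hTS, hSSn]
  module

def OrbitSmall (T S : F →L[ℂ] F) (n : ℕ) (ε : ℝ) (f : F) : Prop :=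
  ∀ N : ℕ, ∑ l ∈ range N, (‖(T ^ ((l + 1) * n)) f‖ + ‖(S ^ ((l + 1) * n)) f‖) ≤ ε

lemma OrbitSmall.norm_le {n : ℕ} {ε : ℝ} {f : F} (h : OrbitSmall T S n ε f) :
    ‖(T ^ n) f‖ + ‖(S ^ n) f‖ + (‖(T ^ (2 * n)) f‖ + ‖(S ^ (2 * n)) f‖) ≤ ε := by
  simpa [sum_range_succ, ← two_mul] using h 2

lemma topTransitive_cosOp (hTS : T * S = 1) {E : Set F} (hE : Dense E)
    (h : ∀ f₁ ∈ E, ∀ f₂ ∈ E, ∀ ε > 0, ∃ n > 0, ∃ g₁ g₂ : F, ‖f₁ - g₁‖ < ε ∧ ‖f₂ - g₂‖ < ε ∧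
      OrbitSmall T S n ε g₁ ∧ OrbitSmall T S n ε g₂) :
    TopTransitive (cosOp T S) := by
  intro U V hU hV hU₀ hV₀
  obtain ⟨f₁, hf₁U, hf₁E⟩ := hE.inter_open_nonempty U hU hU₀
  obtain ⟨f₂, hf₂V, hf₂E⟩ := hE.inter_open_nonempty V hV hV₀
  obtain ⟨r₁, hr₁, hballU⟩ := Metric.isOpen_iff.1 hU f₁ hf₁U
  obtain ⟨r₂, hr₂, hballV⟩ := Metric.isOpen_iff.1 hV f₂ hf₂V
  obtain ⟨n, hn, g₁, g₂, hg₁, hg₂, horb₁, horb₂⟩ :=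
    h f₁ hf₁E f₂ hf₂E (min r₁ r₂ / 3) (by positivity)
  have b₁ := horb₁.norm_le
  have b₂ := horb₂.norm_le
  have hr₁' := min_le_left r₁ r₂
  have hr₂' := min_le_right r₁ r₂
  refine ⟨n, hn, _, ⟨g₁ + (2 : ℂ) • (S ^ n) g₂, hballU ?_, rfl⟩, hballV ?_⟩
  · rw [Metric.mem_ball, dist_eq_norm]
    calc ‖g₁ + (2 : ℂ) • (S ^ n) g₂ - f₁‖ = ‖-(f₁ - g₁) + (2 : ℂ) • (S ^ n) g₂‖ := by
          congr 1; abel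
      _ ≤ ‖f₁ - g₁‖ + 2 * ‖(S ^ n) g₂‖ := by
        refine (norm_add_le _ _).trans_eq ?_; simp [norm_smul, norm_sub_rev]
      _ < r₁ := by linarith [norm_nonneg ((T ^ n) g₂), norm_nonneg ((T ^ (2 * n)) g₂),
          norm_nonneg ((S ^ (2 * n)) g₂)]
  · rw [Metric.mem_ball, dist_eq_norm, cosOp_apply_add_two_smul hTS]
    calc _ = ‖-(f₂ - g₂) + (2 : ℂ)⁻¹ • ((T ^ n) g₁ + (S ^ n) g₁) + (S ^ (2 * n)) g₂‖ := by
          congr 1; abel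
      _ ≤ ‖f₂ - g₂‖ + ‖(T ^ n) g₁ + (S ^ n) g₁‖ / 2 + ‖(S ^ (2 * n)) g₂‖ := by
        refine norm_add₃_le.trans_eq ?_
        rw [norm_neg, norm_smul, norm_inv, Complex.norm_two, inv_mul_eq_div]
      _ ≤ ‖f₂ - g₂‖ + (‖(T ^ n) g₁‖ + ‖(S ^ n) g₁‖) / 2 + ‖(S ^ (2 * n)) g₂‖ := by
        gcongr; exact norm_add_le _ _
      _ < r₂ := by linarith [norm_nonneg ((T ^ (2 * n)) g₁), norm_nonneg ((S ^ (2 * n)) g₁),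
          norm_nonneg ((T ^ n) g₂), norm_nonneg ((S ^ n) g₂), norm_nonneg ((T ^ (2 * n)) g₂)]

end CosineOperators

section CosineOperatorsComplete

variable {F : Type*} [NormedAddCommGroup F] [NormedSpace ℂ F] [CompleteSpace F]
  {T S : F →L[ℂ] F}

/-- The periodic point is the sum of the full `ℤ`-orbit of `f` under `Tⁿ`. -/
lemma OrbitSmall.exists_mem_periodicSet_norm_sub_le (hTS : T * S = 1) (hST : S * T = 1)
    {n : ℕ} (hn : 0 < n) {ε : ℝ} {f : F} (hf : OrbitSmall T S n ε f) :
    ∃ p ∈ periodicSet (cosOp T S), ‖p - f‖ ≤ ε := by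
  let U : (F →L[ℂ] F)ˣ := ⟨T ^ n, S ^ n, pow_mul_pow_eq_one n hTS, pow_mul_pow_eq_one n hST⟩
  let v : ℤ → F := fun j => ((U ^ j : (F →L[ℂ] F)ˣ) : F →L[ℂ] F) f
  have hv_nat (l : ℕ) : v l = (T ^ (l * n)) f := by
    simp [v, U, Units.val_pow_eq_pow_val, ← pow_mul, mul_comm]
  have hv_neg (l : ℕ) : v (-(l + 1)) = (S ^ ((l + 1) * n)) f := by
    change ((U ^ (-((l + 1 : ℕ) : ℤ)) : (F →L[ℂ] F)ˣ) : F →L[ℂ] F) f = _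
    rw [zpow_neg, zpow_natCast, ← inv_pow, Units.val_pow_eq_pow_val, mul_comm, pow_mul]
    rfl
  have hsum : Summable fun l : ℕ => ‖(T ^ ((l + 1) * n)) f‖ + ‖(S ^ ((l + 1) * n)) f‖ :=
    summable_of_sum_range_le (fun _ => by positivity) hf
  have hsum_pos : Summable fun l : ℕ => v (l + 1 : ℕ) := by
    simp_rw [hv_nat]
    exact Summable.of_norm <| hsum.of_nonneg_of_le (fun _ => norm_nonneg _)
      fun _ => le_add_of_nonneg_right (norm_nonneg _)
  have hsum_neg : Summable fun l : ℕ => v (-(l + 1)) := by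
    simp_rw [hv_neg]
    exact Summable.of_norm <| hsum.of_nonneg_of_le (fun _ => norm_nonneg _)
      fun _ => le_add_of_nonneg_left (norm_nonneg _)
  have hsum_nat : Summable fun l : ℕ => v l := (summable_nat_add_iff 1).1 hsum_pos
  have hv : Summable v := .of_nat_of_neg_add_one hsum_nat hsum_neg
  refine ⟨∑' j, v j, mem_periodicSet_cosOp hST hn ?_, ?_⟩
  · have hshift (j : ℤ) : (T ^ n) (v j) = v (j + 1) := by
      simp only [v, add_comm j, zpow_one_add, Units.val_mul, mul_apply_eq_comp]
      rfl
    rw [ContinuousLinearMap.map_tsum _ hv]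
    simp_rw [hshift]
    exact (Equiv.addRight 1).tsum_eq v
  · have hp : ∑' j, v j - f = ∑' l : ℕ, (v (l + 1 : ℕ) + v (-(l + 1))) := by
      rw [tsum_of_nat_of_neg_add_one hsum_nat hsum_neg, hsum_nat.tsum_eq_zero_add,
        hsum_pos.tsum_add hsum_neg, hv_nat 0, zero_mul, pow_zero, one_apply_eq_self, add_assoc,
        add_sub_cancel_left]
    rw [hp]
    refine tsum_of_norm_bounded hsum.hasSum (fun l => ?_) |>.trans
      (Real.tsum_le_of_sum_range_le (fun _ => by positivity) hf)
    rw [hv_nat, hv_neg]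
    exact norm_add_le _ _

lemma dense_periodicSet_cosOp (hTS : T * S = 1) (hST : S * T = 1) {E : Set F} (hE : Dense E)
    (h : ∀ f ∈ E, ∀ ε > 0, ∃ n > 0, ∃ g : F, ‖f - g‖ < ε ∧ OrbitSmall T S n ε g) :
    Dense (periodicSet (cosOp T S)) := by
  refine Dense.of_closure (hE.mono fun f hf => Metric.mem_closure_iff.2 fun ε hε => ?_)
  obtain ⟨n, hn, g, hfg, hg⟩ := h f hf (ε / 2) (by positivity)
  obtain ⟨p, hp, hpg⟩ := hg.exists_mem_periodicSet_norm_sub_le hTS hST hn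
  refine ⟨p, hp, ?_⟩
  calc dist f p ≤ ‖f - g‖ + ‖p - g‖ := by
        rw [dist_eq_norm, norm_sub_rev p]; exact norm_sub_le_norm_sub_add_norm_sub f g p
    _ < ε := by linarith

lemma isChaotic_cosOp (hTS : T * S = 1) (hST : S * T = 1) {E : Set F} (hE : Dense E)
    (h : ∀ f₁ ∈ E, ∀ f₂ ∈ E, ∀ ε > 0, ∃ n > 0, ∃ g₁ g₂ : F, ‖f₁ - g₁‖ < ε ∧ ‖f₂ - g₂‖ < ε ∧
      OrbitSmall T S n ε g₁ ∧ OrbitSmall T S n ε g₂) :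
    IsChaotic (cosOp T S) := by
  refine ⟨topTransitive_cosOp hTS hE h, dense_periodicSet_cosOp hTS hST hE fun f hf ε hε => ?_⟩
  obtain ⟨n, hn, g, -, hfg, -, hg, -⟩ := h f hf f hf ε hε
  exact ⟨n, hn, g, hfg, hg⟩

end CosineOperatorsComplete

lemma norm_mul_le_mul_norm_indicator {X : Type*} {D : Set X} {M : ℝ} (φ : X → ℂ) {z : ℂ}
    {x : X} (hz : ‖z‖ ≤ D.indicator (fun _ => M) x) : ‖φ x * z‖ ≤ M * ‖D.indicator φ x‖ := by
  by_cases hx : x ∈ D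
  · rw [Set.indicator_of_mem hx] at hz ⊢
    rw [norm_mul, mul_comm]
    exact mul_le_mul_of_nonneg_right hz (norm_nonneg _)
  · rw [Set.indicator_of_notMem hx] at hz ⊢
    simp [norm_le_zero_iff.1 hz]

lemma norm_le_indicator_of_support_subset {X : Type*} {f : X → ℂ} {C M : ℝ} {K K' : Set X}
    (hC : ∀ x, ‖f x‖ ≤ C) (hK : ∀ x ∉ K, f x = 0) (hKK' : K ⊆ K') (hCM : C ≤ M) (x : X) :
    ‖f x‖ ≤ K'.indicator (fun _ => M) x := by
  by_cases hx : x ∈ K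
  · rw [Set.indicator_of_mem (hKK' hx)]
    exact (hC x).trans hCM
  · rw [hK x hx, norm_zero]
    exact Set.indicator_nonneg (fun _ _ => ((norm_nonneg _).trans (hC x)).trans hCM) x

lemma IsWeightPair.ne_zero {X : Type*} [MeasurableSpace X] {w : X → ℝ} (hw : IsWeightPair w)
    (x : X) : w x ≠ 0 := by
  obtain ⟨-, -, c, hc, hcw⟩ := hw
  exact (hc.trans_le (hcw x)).ne'

namespace BanachFunctionSpace

variable {X : Type*} [TopologicalSpace X] [MeasurableSpace X]
  {F : Type*} [NormedAddCommGroup F] [NormedSpace ℂ F] [CompleteSpace F]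
  {B : BanachFunctionSpace X F} {α : X ≃ X}

lemma IsSolid.norm_le_mul (hB : B.IsSolid) {u v : F} {M : ℝ} (hM : 0 ≤ M)
    (h : ∀ x, ‖B.toFunL u x‖ ≤ M * ‖B.toFunL v x‖) : ‖u‖ ≤ M * ‖v‖ := by
  obtain ⟨u', hu', hnorm⟩ := hB ((M : ℂ) • v) (B.toFunL u) (B.measurable' u) fun x => by
    simpa [norm_smul, abs_of_nonneg hM] using h x
  rw [← B.injective hu']
  simpa [norm_smul, abs_of_nonneg hM] using hnorm

lemma IsSolid.exists_indicator (hB : B.IsSolid) (f : F) {D : Set X} (hD : MeasurableSet D) :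
    ∃ g : F, B.toFunL g = D.indicator (B.toFunL f) := by
  obtain ⟨g, hg, -⟩ := hB f _ ((B.measurable' f).indicator hD) fun x =>
    norm_indicator_le_norm_self _ x
  exact ⟨g, hg⟩

lemma IsSolid.exists_truncation (hB : B.IsSolid) {K D : Set X} (hD : MeasurableSet D) {M : ℝ}
    (hM : 0 ≤ M) {f : F} (hf : ∀ x, ‖B.toFunL f x‖ ≤ K.indicator (fun _ => M) x) {g : F}
    (hg : B.toFunL g = (K \ D).indicator 1) :
    ∃ f' : F, (∀ x, ‖B.toFunL f' x‖ ≤ D.indicator (fun _ => M) x) ∧ ‖f - f'‖ ≤ M * ‖g‖ := by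
  obtain ⟨f', hf'⟩ := hB.exists_indicator f hD
  refine ⟨f', fun x => ?_, hB.norm_le_mul hM fun x => ?_⟩
  all_goals
    specialize hf x
    by_cases hxD : x ∈ D <;> by_cases hxK : x ∈ K <;> simp_all

lemma IsInvariant.symm (h : B.IsInvariant α) : B.IsInvariant α.symm :=
  fun f => (h f).symm

lemma IsInvariant.exists_comp_iterate (h : B.IsInvariant α) (f : F) (n : ℕ) :
    ∃ g : F, B.toFunL g = B.toFunL f ∘ (⇑α)^[n] ∧ ‖g‖ = ‖f‖ := by
  induction n with
  | zero => exact ⟨f, rfl, rfl⟩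
  | succ n ih =>
    obtain ⟨g, hg, hgf⟩ := ih
    obtain ⟨g', hg', hg'g⟩ := (h g).1
    exact ⟨g', by rw [hg', hg, Function.iterate_succ, Function.comp_assoc], hg'g.trans hgf⟩

section WeightedTranslation

variable {w : X → ℝ} {T S : F →L[ℂ] F}

lemma toFunL_pow_apply (hT : ∀ (f : F) (x : X), B.toFunL (T f) x = (w x : ℂ) * B.toFunL f (α x))
    (n : ℕ) (f : F) (x : X) :
    B.toFunL ((T ^ n) f) x
      = ((∏ s ∈ range n, w ((⇑α)^[s] x) : ℝ) : ℂ) * B.toFunL f ((⇑α)^[n] x) := by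
  induction n generalizing f with
  | zero => simp
  | succ n ih =>
    rw [pow_succ, mul_apply_eq_comp, ih, hT, prod_range_succ, Function.iterate_succ_apply']
    push_cast
    ring

lemma toFunL_pow_apply_symm_iterate
    (hT : ∀ (f : F) (x : X), B.toFunL (T f) x = (w x : ℂ) * B.toFunL f (α x))
    (n : ℕ) (f : F) (y : X) :
    B.toFunL ((T ^ n) f) ((⇑α.symm)^[n] y)
      = ((∏ s ∈ Icc 1 n, w ((⇑α.symm)^[s] y) : ℝ) : ℂ) * B.toFunL f y := by
  induction n with
  | zero => simp
  | succ n ih =>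
    rw [pow_succ', mul_apply_eq_comp, hT, Function.iterate_succ_apply', α.apply_symm_apply, ih,
      prod_Icc_succ_top (by omega), Function.iterate_succ_apply']
    push_cast
    ring

lemma toFunL_inv_pow_apply_iterate
    (hT : ∀ (f : F) (x : X), B.toFunL (T f) x = (w x : ℂ) * B.toFunL f (α x))
    (hTS : T * S = 1) (hw : ∀ x, w x ≠ 0) (n : ℕ) (f : F) (y : X) :
    B.toFunL ((S ^ n) f) ((⇑α)^[n] y)
      = (((∏ s ∈ range n, w ((⇑α)^[s] y))⁻¹ : ℝ) : ℂ) * B.toFunL f y := by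
  have h := toFunL_pow_apply hT n ((S ^ n) f) y
  rw [pow_apply_pow_apply hTS] at h
  have hne : ((∏ s ∈ range n, w ((⇑α)^[s] y) : ℝ) : ℂ) ≠ 0 := by
    exact_mod_cast prod_ne_zero_iff.2 fun s _ => hw _
  rw [h, Complex.ofReal_inv, inv_mul_cancel_left₀ hne]

lemma norm_pow_apply_le (hB : B.IsSolid) (hinv : B.IsInvariant α)
    (hT : ∀ (f : F) (x : X), B.toFunL (T f) x = (w x : ℂ) * B.toFunL f (α x))
    {D : Set X} {M : ℝ} (hM : 0 ≤ M) {f : F}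
    (hf : ∀ x, ‖B.toFunL f x‖ ≤ D.indicator (fun _ => M) x) {n : ℕ} {a : F}
    (ha : B.toFunL a = D.indicator fun x => ((∏ s ∈ Icc 1 n, w ((⇑α.symm)^[s] x) : ℝ) : ℂ)) :
    ‖(T ^ n) f‖ ≤ M * ‖a‖ := by
  obtain ⟨g, hg, hgn⟩ := hinv.symm.exists_comp_iterate ((T ^ n) f) n
  rw [← hgn]
  refine hB.norm_le_mul hM fun y => ?_
  rw [hg, Function.comp_apply, toFunL_pow_apply_symm_iterate hT, ha]
  exact norm_mul_le_mul_norm_indicator (fun x => _) (hf y)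

lemma norm_inv_pow_apply_le (hB : B.IsSolid) (hinv : B.IsInvariant α)
    (hT : ∀ (f : F) (x : X), B.toFunL (T f) x = (w x : ℂ) * B.toFunL f (α x))
    (hTS : T * S = 1) (hw : ∀ x, w x ≠ 0) {D : Set X} {M : ℝ} (hM : 0 ≤ M) {f : F}
    (hf : ∀ x, ‖B.toFunL f x‖ ≤ D.indicator (fun _ => M) x) {n : ℕ} {b : F}
    (hb : B.toFunL b = D.indicator fun x => (((∏ s ∈ range n, w ((⇑α)^[s] x))⁻¹ : ℝ) : ℂ)) :
    ‖(S ^ n) f‖ ≤ M * ‖b‖ := by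
  obtain ⟨g, hg, hgn⟩ := hinv.exists_comp_iterate ((S ^ n) f) n
  rw [← hgn]
  refine hB.norm_le_mul hM fun y => ?_
  rw [hg, Function.comp_apply, toFunL_inv_pow_apply_iterate hT hTS hw, hb]
  exact norm_mul_le_mul_norm_indicator (fun x => _) (hf y)

def ChaosCondition (B : BanachFunctionSpace X F) (α : X ≃ X) (w : X → ℝ) (K : Set X) : Prop :=
  ∃ (D : ℕ → Set X) (nk : ℕ → ℕ) (g : ℕ → F) (a b : ℕ → ℕ → F),
    (∀ k, MeasurableSet (D k)) ∧ (∀ k, D k ⊆ K) ∧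
    StrictMono nk ∧ (∀ k, 0 < nk k) ∧
    (∀ k, B.toFunL (g k) = Set.indicator (K \ D k) 1) ∧
    Tendsto (fun k => ‖g k‖) atTop (𝓝 0) ∧
    (∀ k l, B.toFunL (a k l) = Set.indicator (D k)
      (fun x => ((∏ s ∈ Icc 1 ((l + 1) * nk k), w ((⇑α.symm)^[s] x) : ℝ) : ℂ))) ∧
    (∀ k, Summable fun l => ‖a k l‖) ∧
    Tendsto (fun k => ∑' l, ‖a k l‖) atTop (𝓝 0) ∧
    (∀ k l, B.toFunL (b k l) = Set.indicator (D k)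
      (fun x => (((∏ s ∈ range ((l + 1) * nk k), w ((⇑α)^[s] x))⁻¹ : ℝ) : ℂ))) ∧
    (∀ k, Summable fun l => ‖b k l‖) ∧
    Tendsto (fun k => ∑' l, ‖b k l‖) atTop (𝓝 0)

lemma ChaosCondition.exists_orbitSmall {K : Set X} (hK : ChaosCondition B α w K)
    (hB : B.IsSolid) (hinv : B.IsInvariant α)
    (hT : ∀ (f : F) (x : X), B.toFunL (T f) x = (w x : ℂ) * B.toFunL f (α x))
    (hTS : T * S = 1) (hw : ∀ x, w x ≠ 0) {M : ℝ} (hM : 0 ≤ M) {ε : ℝ} (hε : 0 < ε) :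
    ∃ n > 0, ∀ f : F, (∀ x, ‖B.toFunL f x‖ ≤ K.indicator (fun _ => M) x) →
      ∃ g : F, ‖f - g‖ < ε ∧ OrbitSmall T S n ε g := by
  obtain ⟨D, nk, g, a, b, hD, -, -, hnk, hg, hg0, ha, ha_sum, ha0, hb, hb_sum, hb0⟩ := hK
  have hsmall : ∀ᶠ k in atTop, M * ‖g k‖ < ε ∧ M * (∑' l, ‖a k l‖ + ∑' l, ‖b k l‖) < ε := by
    refine ((hg0.const_mul M).eventually_lt_const ?_).and
      (((ha0.add hb0).const_mul M).eventually_lt_const ?_) <;> simpa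
  obtain ⟨k, hgk, habk⟩ := hsmall.exists
  refine ⟨nk k, hnk k, fun f hf => ?_⟩
  obtain ⟨f', hf', hff'⟩ := hB.exists_truncation (hD k) hM hf (hg k)
  refine ⟨f', hff'.trans_lt hgk, fun N => ?_⟩
  calc ∑ l ∈ range N, (‖(T ^ ((l + 1) * nk k)) f'‖ + ‖(S ^ ((l + 1) * nk k)) f'‖)
      ≤ ∑ l ∈ range N, (M * ‖a k l‖ + M * ‖b k l‖) :=
        sum_le_sum fun l _ => add_le_add (norm_pow_apply_le hB hinv hT hM hf' (ha k l))
          (norm_inv_pow_apply_le hB hinv hT hTS hw hM hf' (hb k l))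
    _ ≤ M * (∑' l, ‖a k l‖ + ∑' l, ‖b k l‖) := by
        rw [sum_add_distrib, ← mul_sum, ← mul_sum, mul_add]
        gcongr
        · exact (ha_sum k).sum_le_tsum _ fun _ _ => norm_nonneg _
        · exact (hb_sum k).sum_le_tsum _ fun _ _ => norm_nonneg _
    _ ≤ ε := habk.le

end WeightedTranslation

end BanachFunctionSpace

theorem stmt6_general {X : Type*} [TopologicalSpace X] [MeasurableSpace X]
    {F : Type*} [NormedAddCommGroup F] [NormedSpace ℂ F] [CompleteSpace F]
    (B : BanachFunctionSpace X F) (α : X ≃ X)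
    (hΩ : B.ConditionOmega α)
    (w : X → ℝ) (hw : IsWeightPair w) (T : F →L[ℂ] F)
    (hT : ∀ (f : F) (x : X), B.toFunL (T f) x = (w x : ℂ) * B.toFunL f (α x)) (S : F →L[ℂ] F) (hST : ∀ f : F, S (T f) = f) (hTS : ∀ f : F, T (S f) = f)
    (hcond : ∀ K : Set X, IsCompact K →
      ∃ (D : ℕ → Set X) (nk : ℕ → ℕ) (g : ℕ → F) (a b : ℕ → ℕ → F),
        (∀ k, MeasurableSet (D k)) ∧ (∀ k, D k ⊆ K) ∧
        StrictMono nk ∧ (∀ k, 0 < nk k) ∧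
        (∀ k, B.toFunL (g k) = Set.indicator (K \ D k) 1) ∧
        Tendsto (fun k => ‖g k‖) atTop (𝓝 0) ∧
        (∀ k l, B.toFunL (a k l) = Set.indicator (D k)
          (fun x => ((∏ s ∈ Finset.Icc 1 ((l + 1) * nk k), w ((⇑α.symm)^[s] x) : ℝ) : ℂ))) ∧
        (∀ k, Summable fun l => ‖a k l‖) ∧
        Tendsto (fun k => ∑' l, ‖a k l‖) atTop (𝓝 0) ∧
        (∀ k l, B.toFunL (b k l) = Set.indicator (D k)
          (fun x => (((∏ s ∈ Finset.range ((l + 1) * nk k), w ((⇑α)^[s] x))⁻¹ : ℝ) : ℂ))) ∧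
        (∀ k, Summable fun l => ‖b k l‖) ∧
        Tendsto (fun k => ∑' l, ‖b k l‖) atTop (𝓝 0)) :
    IsChaotic (cosOp T S) := by
  obtain ⟨hB, hinv, -, hdense⟩ := hΩ
  have hTS' : T * S = 1 := ContinuousLinearMap.ext hTS
  refine isChaotic_cosOp hTS' (ContinuousLinearMap.ext hST) hdense ?_
  rintro f₁ ⟨⟨C₁, hC₁⟩, K₁, hK₁, hf₁⟩ f₂ ⟨⟨C₂, hC₂⟩, K₂, hK₂, hf₂⟩ ε hε
  have hCM : max C₁ C₂ ≤ max (max C₁ C₂) 0 := le_max_left _ _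
  obtain ⟨n, hn, happrox⟩ := BanachFunctionSpace.ChaosCondition.exists_orbitSmall
    (hcond _ (hK₁.union hK₂)) hB hinv hT hTS' hw.ne_zero (le_max_right _ 0) hε
  obtain ⟨g₁, hfg₁, hg₁⟩ := happrox f₁ <| norm_le_indicator_of_support_subset hC₁ hf₁
    Set.subset_union_left ((le_max_left _ _).trans hCM)
  obtain ⟨g₂, hfg₂, hg₂⟩ := happrox f₂ <| norm_le_indicator_of_support_subset hC₂ hf₂
    Set.subset_union_right ((le_max_right _ _).trans hCM)
  exact ⟨n, hn, g₁, g₂, hfg₁, hfg₂, hg₁, hg₂⟩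

/-- sufficient condition for the cosine operator sequence to be chaotic. -/
theorem stmt6 {X : Type*} [TopologicalSpace X] [MeasurableSpace X] [BorelSpace X]
    {F : Type*} [NormedAddCommGroup F] [NormedSpace ℂ F] [CompleteSpace F]
    (B : BanachFunctionSpace X F) (α : X ≃ X)
    (hmα : Measurable (⇑α)) (hmαs : Measurable (⇑α.symm))
    (hΩ : B.ConditionOmega α)
    (w : X → ℝ) (hw : IsWeightPair w) (T : F →L[ℂ] F)
    (hT : ∀ (f : F) (x : X), B.toFunL (T f) x = (w x : ℂ) * B.toFunL f (α x)) (S : F →L[ℂ] F) (hST : ∀ f : F, S (T f) = f) (hTS : ∀ f : F, T (S f) = f)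
    (hcond : ∀ K : Set X, IsCompact K →
      ∃ (D : ℕ → Set X) (nk : ℕ → ℕ) (g : ℕ → F) (a b : ℕ → ℕ → F),
        (∀ k, MeasurableSet (D k)) ∧ (∀ k, D k ⊆ K) ∧
        StrictMono nk ∧ (∀ k, 0 < nk k) ∧
        (∀ k, B.toFunL (g k) = Set.indicator (K \ D k) 1) ∧
        Tendsto (fun k => ‖g k‖) atTop (𝓝 0) ∧
        (∀ k l, B.toFunL (a k l) = Set.indicator (D k)
          (fun x => ((∏ s ∈ Finset.Icc 1 ((l + 1) * nk k), w ((⇑α.symm)^[s] x) : ℝ) : ℂ))) ∧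
        (∀ k, Summable fun l => ‖a k l‖) ∧
        Tendsto (fun k => ∑' l, ‖a k l‖) atTop (𝓝 0) ∧
        (∀ k l, B.toFunL (b k l) = Set.indicator (D k)
          (fun x => (((∏ s ∈ Finset.range ((l + 1) * nk k), w ((⇑α)^[s] x))⁻¹ : ℝ) : ℂ))) ∧
        (∀ k, Summable fun l => ‖b k l‖) ∧
        Tendsto (fun k => ∑' l, ‖b k l‖) atTop (𝓝 0)) :
    IsChaotic (cosOp T S) :=
  stmt6_general B α hΩ w hw T hT S hST hTS hcond
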